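/- Let λ₁, λ₂, ρ₁, ρ₂ > 0 with λ₁/ρ₁ ≠ λ₂/ρ₂. Let X ~ Exp(λ₁/ρ₁) and Y ~ Exp(λ₂/ρ₂) be independent. Then E[log₂(1 + X + Y)] = [ (λ₂/ρ₂)·φ′(λ₁,ρ₁) − (λ₁/ρ₁)·φ′(λ₂,ρ₂) ] / ( λ₂/ρ₂ − λ₁/ρ₁ ), where φ′(l, φ₀) = (φ₀/ln 2)·∫₀^∞ e^{−l t}/(1 + φ₀ t) dt. -/

import Mathlib

/-!
Write `a = l₁/ρ₁`, `b = l₂/ρ₂` and `S = X + Y`. By the layer-cake formula with `log (1 + s) =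
∫₀ˢ dt/(1+t)`, `E[log (1 + S)] = ∫₀^∞ P(S > t)/(1+t) dt`. Conditioning on `X`, the tail of the
sum of independent `Exp(a)` and `Exp(b)` variables is
`P(S > t) = (b e^{-at} - a e^{-bt})/(b - a)`, so the expectation is a combination of the
integrals `∫₀^∞ e^{-ct}/(1+t) dt`, `c = a, b`, which are `φ′` after the substitution `t ↦ ρ t`.
-/

open MeasureTheory ProbabilityTheory Real Set

noncomputable def phiPrime (l φ₀ : ℝ) : ℝ :=
  (φ₀ / Real.log 2) * ∫ t in Set.Ioi (0 : ℝ), Real.exp (-l * t) / (1 + φ₀ * t)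

open scoped ENNReal

lemma integral_inv_one_add {s : ℝ} (hs : 0 ≤ s) : ∫ t in (0 : ℝ)..s, (1 + t)⁻¹ = log (1 + s) := by
  rw [intervalIntegral.integral_comp_add_left (fun t => t⁻¹),
    integral_inv_of_pos (by norm_num) (by linarith), add_zero, div_one]

lemma intervalIntegrable_inv_one_add {s : ℝ} (hs : 0 ≤ s) :
    IntervalIntegrable (fun t => (1 + t)⁻¹) volume 0 s := by
  refine (ContinuousOn.inv₀ (by fun_prop) fun t ht => ?_).intervalIntegrable
  rw [uIcc_of_le hs] at ht
  linarith [ht.1]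

lemma integral_log_one_add_eq_integral_measureReal_lt {α : Type*} [MeasurableSpace α]
    (μ : Measure α) [IsFiniteMeasure μ] {f : α → ℝ} (hf_nn : 0 ≤ᵐ[μ] f) (hf : AEMeasurable f μ) :
    ∫ ω, log (1 + f ω) ∂μ = ∫ t in Ioi 0, μ.real {ω | t < f ω} / (1 + t) := by
  have h_anti : Antitone fun t => μ.real {ω | t < f ω} :=
    fun s t hst => measureReal_mono fun ω hω => lt_of_le_of_lt hst hω
  have h_meas : Measurable fun t => μ.real {ω | t < f ω} / (1 + t) :=
    h_anti.measurable.div (by fun_prop)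
  have h_layer := lintegral_comp_eq_lintegral_meas_lt_mul μ hf_nn hf
    (fun s hs => intervalIntegrable_inv_one_add hs.le)
    (ae_restrict_of_forall_mem measurableSet_Ioi fun t (ht : 0 < t) => by positivity)
  rw [integral_eq_lintegral_of_nonneg_ae (hf_nn.mono fun ω (h : 0 ≤ f ω) => log_nonneg (by linarith))
      (measurable_log.comp_aemeasurable (hf.const_add 1)).aestronglyMeasurable,
    integral_eq_lintegral_of_nonneg_ae
      (ae_restrict_of_forall_mem measurableSet_Ioi fun t (ht : 0 < t) => by positivity)
      h_meas.aestronglyMeasurable]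
  congr 1
  calc ∫⁻ ω, ENNReal.ofReal (log (1 + f ω)) ∂μ
      = ∫⁻ ω, ENNReal.ofReal (∫ t in (0 : ℝ)..f ω, (1 + t)⁻¹) ∂μ :=
        lintegral_congr_ae (hf_nn.mono fun ω (h : 0 ≤ f ω) => by
          simp only [integral_inv_one_add h])
    _ = ∫⁻ t in Ioi 0, μ {ω | t < f ω} * ENNReal.ofReal (1 + t)⁻¹ := h_layer
    _ = ∫⁻ t in Ioi 0, ENNReal.ofReal (μ.real {ω | t < f ω} / (1 + t)) :=
        setLIntegral_congr_fun measurableSet_Ioi fun t ht => by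
          rw [div_eq_mul_inv, ENNReal.ofReal_mul measureReal_nonneg, ofReal_measureReal]

lemma measure_prod_setOf_lt_add (μ ν : Measure ℝ) [SFinite ν] (t : ℝ) :
    μ.prod ν {p | t < p.1 + p.2} = ∫⁻ x, ν (Ioi (t - x)) ∂μ := by
  rw [Measure.prod_apply (measurableSet_lt measurable_const (by fun_prop))]
  congr! with x
  ext y
  simp [sub_lt_iff_lt_add']

lemma expMeasure_Ioi {r : ℝ} (hr : 0 < r) (u : ℝ) :
    expMeasure r (Ioi u) = ENNReal.ofReal (if 0 ≤ u then exp (-(r * u)) else 1) := by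
  have := isProbabilityMeasure_expMeasure hr
  rw [← compl_Iic, prob_compl_eq_one_sub measurableSet_Iic, ← ofReal_cdf, ← ENNReal.ofReal_one,
    ← ENNReal.ofReal_sub _ (cdf_nonneg _ u), cdf_expMeasure_eq hr]
  split_ifs <;> ring_nf

lemma lintegral_expMeasure (r : ℝ) {f : ℝ → ℝ≥0∞} (hf : Measurable f) :
    ∫⁻ x, f x ∂expMeasure r = ∫⁻ x in Ici 0, ENNReal.ofReal (r * exp (-(r * x))) * f x := by
  have h_pdf : Measurable (exponentialPDF r) := (measurable_exponentialPDFReal r).ennreal_ofReal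
  rw [show expMeasure r = volume.withDensity (exponentialPDF r) from rfl,
    lintegral_withDensity_eq_lintegral_mul _ h_pdf hf, ← lintegral_indicator measurableSet_Ici]
  refine lintegral_congr fun x => ?_
  by_cases hx : 0 ≤ x
  · simp [indicator_of_mem (mem_Ici.2 hx), exponentialPDF_of_nonneg hx]
  · simp [indicator_of_notMem (show x ∉ Ici 0 from hx), exponentialPDF_of_neg (not_le.1 hx)]

lemma ae_nonneg_expMeasure (r : ℝ) : ∀ᵐ x ∂expMeasure r, 0 ≤ x := by
  rw [ae_iff, show {x : ℝ | ¬0 ≤ x} = Iio 0 by ext; simp,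
    show expMeasure r = volume.withDensity (exponentialPDF r) from rfl,
    withDensity_apply _ measurableSet_Iio]
  exact lintegral_exponentialPDF_of_nonpos le_rfl

lemma lintegral_expMeasure_Ioi_sub {a b : ℝ} (ha : 0 < a) (hb : 0 < b) {t : ℝ} (ht : 0 ≤ t) :
    ∫⁻ x, expMeasure b (Ioi (t - x)) ∂expMeasure a =
      ENNReal.ofReal (∫ x in Icc 0 t, a * exp (-(b * t)) * exp ((b - a) * x)) +
        ENNReal.ofReal (∫ x in Ioi t, a * exp (-a * x)) := by
  have h_mono : Monotone fun x => expMeasure b (Ioi (t - x)) :=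
    fun x y hxy => measure_mono (Ioi_subset_Ioi (by linarith))
  have h_Icc : ∫⁻ x in Icc 0 t, ENNReal.ofReal (a * exp (-(a * x))) * expMeasure b (Ioi (t - x))
      = ∫⁻ x in Icc 0 t, ENNReal.ofReal (a * exp (-(b * t)) * exp ((b - a) * x)) := by
    refine setLIntegral_congr_fun measurableSet_Icc fun x hx => ?_
    rw [expMeasure_Ioi hb, if_pos (sub_nonneg.2 hx.2), ← ENNReal.ofReal_mul (by positivity),
      mul_assoc, ← exp_add, mul_assoc, ← exp_add]
    ring_nf
  have h_Ioi : ∫⁻ x in Ioi t, ENNReal.ofReal (a * exp (-(a * x))) * expMeasure b (Ioi (t - x))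
      = ∫⁻ x in Ioi t, ENNReal.ofReal (a * exp (-a * x)) := by
    refine setLIntegral_congr_fun measurableSet_Ioi fun x (hx : t < x) => ?_
    rw [expMeasure_Ioi hb, if_neg (by linarith), ENNReal.ofReal_one, mul_one, neg_mul]
  have h_int_Icc : IntegrableOn (fun x => a * exp (-(b * t)) * exp ((b - a) * x)) (Icc 0 t) :=
    (by fun_prop : Continuous fun x => a * exp (-(b * t)) * exp ((b - a) * x)).integrableOn_Icc
  have h_int_Ioi : IntegrableOn (fun x => a * exp (-a * x)) (Ioi t) :=
    (exp_neg_integrableOn_Ioi t ha).const_mul a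
  rw [lintegral_expMeasure a h_mono.measurable, ← Icc_union_Ioi_eq_Ici ht,
    lintegral_union measurableSet_Ioi ((Iic_disjoint_Ioi le_rfl).mono_left Icc_subset_Iic_self),
    h_Icc, h_Ioi,
    ofReal_integral_eq_lintegral_ofReal h_int_Icc (ae_of_all _ fun x => by positivity),
    ofReal_integral_eq_lintegral_ofReal h_int_Ioi (ae_of_all _ fun x => by positivity)]

lemma measureReal_expMeasure_prod_setOf_lt_add {a b : ℝ} (ha : 0 < a) (hb : 0 < b) (hab : a ≠ b)
    {t : ℝ} (ht : 0 ≤ t) :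
    ((expMeasure a).prod (expMeasure b)).real {p | t < p.1 + p.2} =
      (b * exp (-(a * t)) - a * exp (-(b * t))) / (b - a) := by
  have := isProbabilityMeasure_expMeasure hb
  have h_nn_Icc : 0 ≤ ∫ x in Icc 0 t, a * exp (-(b * t)) * exp ((b - a) * x) :=
    setIntegral_nonneg measurableSet_Icc fun x _ => by positivity
  have h_nn_Ioi : 0 ≤ ∫ x in Ioi t, a * exp (-a * x) :=
    setIntegral_nonneg measurableSet_Ioi fun x _ => by positivity
  have h_sub : b - a ≠ 0 := sub_ne_zero.2 hab.symm
  have h_exp : exp (-(b * t)) * exp ((b - a) * t) = exp (-(a * t)) := by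
    rw [← exp_add]; ring_nf
  rw [measureReal_def, measure_prod_setOf_lt_add, lintegral_expMeasure_Ioi_sub ha hb ht,
    ← ENNReal.ofReal_add h_nn_Icc h_nn_Ioi, ENNReal.toReal_ofReal (add_nonneg h_nn_Icc h_nn_Ioi),
    integral_Icc_eq_integral_Ioc, ← intervalIntegral.integral_of_le ht,
    intervalIntegral.integral_const_mul, intervalIntegral.integral_comp_mul_left _ h_sub,
    smul_eq_mul, mul_zero, integral_exp, exp_zero, integral_const_mul,
    integral_exp_mul_Ioi (by linarith), neg_mul, ← h_exp]
  field_simp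
  ring

lemma integrableOn_exp_neg_mul_div_one_add {c : ℝ} (hc : 0 < c) :
    IntegrableOn (fun t => exp (-(c * t)) / (1 + t)) (Ioi 0) := by
  refine (exp_neg_integrableOn_Ioi 0 hc).mono' (Measurable.aestronglyMeasurable (by fun_prop))
    (ae_restrict_of_forall_mem measurableSet_Ioi fun t (ht : 0 < t) => ?_)
  rw [norm_of_nonneg (by positivity), neg_mul]
  exact div_le_self (exp_pos _).le (by linarith)

lemma integral_log_one_add_fst_add_snd_expMeasure_prod {a b : ℝ} (ha : 0 < a) (hb : 0 < b)
    (hab : a ≠ b) :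
    ∫ p : ℝ × ℝ, log (1 + (p.1 + p.2)) ∂(expMeasure a).prod (expMeasure b) =
      (b * (∫ t in Ioi 0, exp (-(a * t)) / (1 + t))
        - a * ∫ t in Ioi 0, exp (-(b * t)) / (1 + t)) / (b - a) := by
  have := isProbabilityMeasure_expMeasure ha
  have := isProbabilityMeasure_expMeasure hb
  have h_nn : ∀ᵐ p ∂(expMeasure a).prod (expMeasure b), 0 ≤ p.1 + p.2 := by
    filter_upwards [Measure.quasiMeasurePreserving_fst.ae (ae_nonneg_expMeasure a),
      Measure.quasiMeasurePreserving_snd.ae (ae_nonneg_expMeasure b)] with p h₁ h₂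
    exact add_nonneg h₁ h₂
  have h_tail : ∀ t ∈ Ioi (0 : ℝ),
      ((expMeasure a).prod (expMeasure b)).real {p | t < p.1 + p.2} / (1 + t) =
        b / (b - a) * (exp (-(a * t)) / (1 + t)) - a / (b - a) * (exp (-(b * t)) / (1 + t)) :=
    fun t (ht : 0 < t) => by
      rw [measureReal_expMeasure_prod_setOf_lt_add ha hb hab ht.le]
      ring
  rw [integral_log_one_add_eq_integral_measureReal_lt _ h_nn (by fun_prop),
    setIntegral_congr_fun measurableSet_Ioi h_tail,
    integral_sub ((integrableOn_exp_neg_mul_div_one_add ha).const_mul _)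
      ((integrableOn_exp_neg_mul_div_one_add hb).const_mul _),
    integral_const_mul, integral_const_mul]
  ring

lemma phiPrime_eq_integral_div_log_two (l : ℝ) {ρ : ℝ} (hρ : 0 < ρ) :
    phiPrime l ρ = (∫ t in Ioi 0, exp (-(l / ρ * t)) / (1 + t)) / log 2 := by
  have h := integral_comp_mul_left_Ioi (fun t => exp (-(l / ρ * t)) / (1 + t)) 0 hρ
  have h_arg : ∀ x, l / ρ * (ρ * x) = l * x := fun x => by field_simp
  simp only [mul_zero, smul_eq_mul, h_arg, ← neg_mul] at h
  rw [phiPrime, h]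
  field_simp

/-- Proposition 3: the average sum rate of two-user uplink distance-based NOMA. For
independent `X ~ Exp(l₁/ρ₁)` and `Y ~ Exp(l₂/ρ₂)` (received signal-power terms) with
`l₁/ρ₁ ≠ l₂/ρ₂`,
`E[log₂(1 + X + Y)] = ((l₂/ρ₂) φ′(l₁,ρ₁) - (l₁/ρ₁) φ′(l₂,ρ₂)) / (l₂/ρ₂ - l₁/ρ₁)`. -/
theorem uplink_noma_average_sum_rate
    {Ω : Type*} [MeasurableSpace Ω] (P : Measure Ω) [IsProbabilityMeasure P]
    (l₁ l₂ ρ₁ ρ₂ : ℝ) (hl₁ : 0 < l₁) (hl₂ : 0 < l₂) (hρ₁ : 0 < ρ₁) (hρ₂ : 0 < ρ₂)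
    (hne : l₁ / ρ₁ ≠ l₂ / ρ₂)
    (X Y : Ω → ℝ) (hmX : Measurable X) (hmY : Measurable Y)
    (hlawX : P.map X = expMeasure (l₁ / ρ₁)) (hlawY : P.map Y = expMeasure (l₂ / ρ₂))
    (hind : IndepFun X Y P) :
    ∫ ω, Real.logb 2 (1 + X ω + Y ω) ∂P =
      ((l₂ / ρ₂) * phiPrime l₁ ρ₁ - (l₁ / ρ₁) * phiPrime l₂ ρ₂) /
        (l₂ / ρ₂ - l₁ / ρ₁) := by
  have h_law : P.map (fun ω => (X ω, Y ω)) =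
      (expMeasure (l₁ / ρ₁)).prod (expMeasure (l₂ / ρ₂)) := by
    rw [← hlawX, ← hlawY]
    exact (indepFun_iff_map_prod_eq_prod_map_map hmX.aemeasurable hmY.aemeasurable).1 hind
  have h_sub : l₂ / ρ₂ - l₁ / ρ₁ ≠ 0 := sub_ne_zero.2 hne.symm
  calc ∫ ω, logb 2 (1 + X ω + Y ω) ∂P
      = (∫ p : ℝ × ℝ, log (1 + (p.1 + p.2)) ∂P.map (fun ω => (X ω, Y ω))) / log 2 := by
        rw [integral_map (hmX.prodMk hmY).aemeasurable
          (Measurable.aestronglyMeasurable (by fun_prop)), ← integral_div]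
        simp only [logb, add_assoc]
    _ = _ := by
        rw [h_law, integral_log_one_add_fst_add_snd_expMeasure_prod (div_pos hl₁ hρ₁)
            (div_pos hl₂ hρ₂) hne, phiPrime_eq_integral_div_log_two _ hρ₁,
          phiPrime_eq_integral_div_log_two _ hρ₂]
        field_simp
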